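/- Let ω ∈ ℕ and let w : ℝ^d → ℂ be smooth with w(0) ≠ 0. Then the function V_ω w satisfies (V_ω w)(0) = 1 and ∂^α(V_ω w)(0) = 0 for every multi-index α with 1 ≤ |α| ≤ ω. -/

import Mathlib

noncomputable section

/-- Partial derivative `∂_i` of a complex-valued function on `ℝ^d = (Fin d → ℝ)`. -/
def pd {d : ℕ} (i : Fin d) (f : (Fin d → ℝ) → ℂ) : (Fin d → ℝ) → ℂ :=
  fun x => fderiv ℝ f x (Pi.single i 1)

/-- Multi-index partial derivative `∂^α = ∏_i ∂_i^{α_i}`. -/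
def mpd {d : ℕ} (α : Fin d → ℕ) (f : (Fin d → ℝ) → ℂ) : (Fin d → ℝ) → ℂ :=
  Fin.foldr d (fun i g => (pd i)^[α i] g) f

/-- Monomial `x^α = ∏_i x_i^{α_i}`. -/
def mono {d : ℕ} (α : Fin d → ℕ) (x : Fin d → ℝ) : ℂ := ∏ i, (x i : ℂ) ^ α i

/-- Multi-index factorial `α! = ∏_i α_i!`. -/
def mfact {d : ℕ} (α : Fin d → ℕ) : ℕ := ∏ i, Nat.factorial (α i)

/-- Order `|α| = Σ_i α_i` of a multi-index. -/
def morder {d : ℕ} (α : Fin d → ℕ) : ℕ := ∑ i, α i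

/-- The finite set of multi-indices `α` with `|α| ≤ ω`. -/
def midx (d ω : ℕ) : Finset (Fin d → ℕ) :=
  (Fintype.piFinset fun _ : Fin d => Finset.range (ω + 1)).filter fun α => morder α ≤ ω

/-- The subtraction operator
`(W_ω^w f)(x) = f(x) − w(x) Σ_{|α| ≤ ω} (x^α/α!) ∂^α(f/w)(0)`. -/
def Wop {d : ℕ} (ω : ℕ) (w f : (Fin d → ℝ) → ℂ) : (Fin d → ℝ) → ℂ :=
  fun x => f x - w x * ∑ α ∈ midx d ω, mono α x / (mfact α : ℂ) * mpd α (fun y => f y / w y) 0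


/-- The `V`-operation `(V_k w)(x) = w(x) Σ_{|μ| ≤ k} (x^μ/μ!) ∂^μ(1/w)(0)`. -/
def Vop {d : ℕ} (k : ℕ) (w : (Fin d → ℝ) → ℂ) : (Fin d → ℝ) → ℂ :=
  fun x => w x * ∑ μ ∈ midx d k, mono μ x / (mfact μ : ℂ) * mpd μ (fun y => (w y)⁻¹) 0

open Set

namespace Vaux

open scoped ContDiff

variable {d : ℕ}

def mpdL (l : List (Fin d)) (f : (Fin d → ℝ) → ℂ) : (Fin d → ℝ) → ℂ := l.foldr pd f

@[simp] lemma mpdL_nil (f : (Fin d → ℝ) → ℂ) : mpdL [] f = f := rfl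

@[simp] lemma mpdL_cons (i : Fin d) (l : List (Fin d)) (f : (Fin d → ℝ) → ℂ) :
    mpdL (i :: l) f = pd i (mpdL l f) := rfl

lemma mpdL_append (l₁ l₂ : List (Fin d)) (f : (Fin d → ℝ) → ℂ) :
    mpdL (l₁ ++ l₂) f = mpdL l₁ (mpdL l₂ f) := List.foldr_append ..

def Lst (α : Fin d → ℕ) : List (Fin d) :=
  (List.finRange d).flatMap fun i => List.replicate (α i) i

lemma mpdL_replicate (n : ℕ) (i : Fin d) (f : (Fin d → ℝ) → ℂ) :
    mpdL (List.replicate n i) f = (pd i)^[n] f := by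
  induction n with
  | zero => rfl
  | succ n ih =>
    rw [List.replicate_succ, mpdL_cons, ih, Function.iterate_succ_apply']

lemma mpd_eq_mpdL (α : Fin d → ℕ) (f : (Fin d → ℝ) → ℂ) : mpd α f = mpdL (Lst α) f := by
  rw [mpd, Fin.foldr_eq_foldr_finRange, Lst]
  induction List.finRange d with
  | nil => rfl
  | cons i L ih =>
    rw [List.foldr_cons, ih, List.flatMap_cons, mpdL_append, mpdL_replicate]

lemma count_Lst (α : Fin d → ℕ) (i : Fin d) : (Lst α).count i = α i := by
  rw [Lst, List.count_flatMap]
  have h : ((List.finRange d).map (List.count i ∘ fun j => List.replicate (α j) j)).sum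
      = ∑ j : Fin d, if i = j then α j else 0 := by
    rw [Fin.sum_univ_def]
    congr 1
    apply List.map_congr_left
    intro j _
    rw [Function.comp_apply, List.count_replicate]
    simp only [beq_iff_eq]
    exact if_congr eq_comm rfl rfl
  rw [h, Finset.sum_ite_eq]
  simp

lemma length_Lst (α : Fin d → ℕ) : (Lst α).length = morder α := by
  rw [Lst, List.length_flatMap, morder, Fin.sum_univ_def]
  congr 1
  apply List.map_congr_left
  intro j _
  simp

lemma perm_Lst (l : List (Fin d)) : l.Perm (Lst fun i => l.count i) :=
  List.perm_iff_count.mpr fun a => by rw [count_Lst]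

end Vaux

namespace Vaux

open scoped ContDiff

variable {d : ℕ} {U : Set (Fin d → ℝ)}

lemma pd_congrOn (hU : IsOpen U) {f g : (Fin d → ℝ) → ℂ} (h : EqOn f g U) (i : Fin d) :
    EqOn (pd i f) (pd i g) U := by
  intro x hx
  have hfg : f =ᶠ[nhds x] g := Filter.eventuallyEq_of_mem (hU.mem_nhds hx) h
  simp only [pd, hfg.fderiv_eq]

lemma mpdL_congrOn (hU : IsOpen U) {f g : (Fin d → ℝ) → ℂ} (h : EqOn f g U)
    (l : List (Fin d)) : EqOn (mpdL l f) (mpdL l g) U := by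
  induction l with
  | nil => exact h
  | cons i l ih => exact pd_congrOn hU ih i

lemma pd_contDiffOn (hU : IsOpen U) {f : (Fin d → ℝ) → ℂ} (hf : ContDiffOn ℝ ∞ f U)
    (i : Fin d) : ContDiffOn ℝ ∞ (pd i f) U := by
  have h1 : ContDiffOn ℝ ∞ (fderiv ℝ f) U := hf.fderiv_of_isOpen hU (by simp)
  exact h1.clm_apply contDiffOn_const

lemma mpdL_contDiffOn (hU : IsOpen U) {f : (Fin d → ℝ) → ℂ} (hf : ContDiffOn ℝ ∞ f U)
    (l : List (Fin d)) : ContDiffOn ℝ ∞ (mpdL l f) U := by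
  induction l with
  | nil => exact hf
  | cons i l ih => exact pd_contDiffOn hU ih i

lemma diffAt (hU : IsOpen U) {f : (Fin d → ℝ) → ℂ} (hf : ContDiffOn ℝ ∞ f U)
    {x : Fin d → ℝ} (hx : x ∈ U) : DifferentiableAt ℝ f x :=
  ((hf.contDiffAt (hU.mem_nhds hx)).of_le (m := 1) (by norm_num)).differentiableAt one_ne_zero

lemma pd_add (i : Fin d) {f g : (Fin d → ℝ) → ℂ} {x : Fin d → ℝ}
    (hf : DifferentiableAt ℝ f x) (hg : DifferentiableAt ℝ g x) :
    pd i (fun y => f y + g y) x = pd i f x + pd i g x := by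
  simp only [pd, fderiv_fun_add hf hg, ContinuousLinearMap.add_apply]

lemma pd_sub (i : Fin d) {f g : (Fin d → ℝ) → ℂ} {x : Fin d → ℝ}
    (hf : DifferentiableAt ℝ f x) (hg : DifferentiableAt ℝ g x) :
    pd i (fun y => f y - g y) x = pd i f x - pd i g x := by
  simp only [pd, fderiv_fun_sub hf hg, ContinuousLinearMap.sub_apply]

lemma pd_mul (i : Fin d) {f g : (Fin d → ℝ) → ℂ} {x : Fin d → ℝ}
    (hf : DifferentiableAt ℝ f x) (hg : DifferentiableAt ℝ g x) :
    pd i (fun y => f y * g y) x = pd i f x * g x + f x * pd i g x := by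
  simp only [pd, fderiv_fun_mul hf hg, ContinuousLinearMap.add_apply,
    ContinuousLinearMap.smul_apply, smul_eq_mul]
  ring

lemma mpdL_add (hU : IsOpen U) {f g : (Fin d → ℝ) → ℂ} (hf : ContDiffOn ℝ ∞ f U)
    (hg : ContDiffOn ℝ ∞ g U) (l : List (Fin d)) :
    EqOn (mpdL l (fun y => f y + g y)) (fun y => mpdL l f y + mpdL l g y) U := by
  induction l with
  | nil => exact fun x _ => rfl
  | cons i l ih =>
    intro x hx
    have h1 := pd_congrOn hU ih i hx
    rw [mpdL_cons, h1, mpdL_cons, mpdL_cons]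
    exact pd_add i (diffAt hU (mpdL_contDiffOn hU hf l) hx)
      (diffAt hU (mpdL_contDiffOn hU hg l) hx)

lemma mpdL_sub (hU : IsOpen U) {f g : (Fin d → ℝ) → ℂ} (hf : ContDiffOn ℝ ∞ f U)
    (hg : ContDiffOn ℝ ∞ g U) (l : List (Fin d)) :
    EqOn (mpdL l (fun y => f y - g y)) (fun y => mpdL l f y - mpdL l g y) U := by
  induction l with
  | nil => exact fun x _ => rfl
  | cons i l ih =>
    intro x hx
    have h1 := pd_congrOn hU ih i hx
    rw [mpdL_cons, h1, mpdL_cons, mpdL_cons]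
    exact pd_sub i (diffAt hU (mpdL_contDiffOn hU hf l) hx)
      (diffAt hU (mpdL_contDiffOn hU hg l) hx)

lemma pd_const_add (c : ℂ) (g : (Fin d → ℝ) → ℂ) (i : Fin d) :
    pd i (fun x => c + g x) = pd i g := by
  funext x
  simp only [pd, fderiv_const_add]

lemma mpdL_const_add (c : ℂ) (g : (Fin d → ℝ) → ℂ) {l : List (Fin d)} (hl : l ≠ []) :
    mpdL l (fun x => c + g x) = mpdL l g := by
  induction l with
  | nil => exact absurd rfl hl
  | cons i l ih =>
    cases l with
    | nil => simpa [mpdL] using pd_const_add c g i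
    | cons j l' =>
      rw [mpdL_cons, ih (by simp)]
      rfl

end Vaux

namespace Vaux

open scoped ContDiff

variable {d : ℕ} {U : Set (Fin d → ℝ)}

lemma pd_comm (hU : IsOpen U) {g : (Fin d → ℝ) → ℂ} (hg : ContDiffOn ℝ ∞ g U) (a b : Fin d) :
    EqOn (pd a (pd b g)) (pd b (pd a g)) U := by
  intro x hx
  have hgat : ContDiffAt ℝ ∞ g x := hg.contDiffAt (hU.mem_nhds hx)
  have hsymm : IsSymmSndFDerivAt ℝ g x :=
    hgat.isSymmSndFDerivAt (n := ∞) (by simp only [minSmoothness_of_isRCLikeNormedField]; decide)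
  have hdf : DifferentiableAt ℝ (fderiv ℝ g) x := by
    have h2 := hgat.fderiv_right (m := 1) (by decide)
    exact h2.differentiableAt one_ne_zero
  have key : ∀ v u : Fin d → ℝ, fderiv ℝ (fun y => fderiv ℝ g y v) x u
      = fderiv ℝ (fderiv ℝ g) x u v := by
    intro v u
    have h2 : HasFDerivAt (fun y => fderiv ℝ g y v)
        ((ContinuousLinearMap.apply ℝ ℂ v).comp (fderiv ℝ (fderiv ℝ g) x)) x :=
      (ContinuousLinearMap.apply ℝ ℂ v).hasFDerivAt.comp x hdf.hasFDerivAt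
    rw [h2.fderiv]
    rfl
  show fderiv ℝ (fun y => fderiv ℝ g y (Pi.single b 1)) x (Pi.single a 1)
      = fderiv ℝ (fun y => fderiv ℝ g y (Pi.single a 1)) x (Pi.single b 1)
  rw [key, key]
  exact hsymm.eq _ _

lemma mpdL_perm (hU : IsOpen U) {f : (Fin d → ℝ) → ℂ} (hf : ContDiffOn ℝ ∞ f U)
    {l₁ l₂ : List (Fin d)} (h : l₁.Perm l₂) : EqOn (mpdL l₁ f) (mpdL l₂ f) U := by
  induction h with
  | nil => exact fun x _ => rfl
  | cons a _ ih => exact pd_congrOn hU ih a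
  | swap a b l => exact pd_comm hU (mpdL_contDiffOn hU hf l) b a
  | trans _ _ ih₁ ih₂ => exact fun x hx => (ih₁ hx).trans (ih₂ hx)

end Vaux

namespace Vaux

open scoped ContDiff

variable {d : ℕ}

def dmono (μ : Fin d → ℕ) (i : Fin d) : Fin d → ℕ := Function.update μ i (μ i - 1)

def cnt (l : List (Fin d)) : Fin d → ℕ := fun i => l.count i

lemma mono_dmono (μ : Fin d → ℕ) (j : Fin d) (x : Fin d → ℝ) :
    mono (dmono μ j) x = (x j : ℂ) ^ (μ j - 1) * ∏ k ∈ Finset.univ.erase j, (x k : ℂ) ^ μ k := by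
  rw [mono, ← Finset.mul_prod_erase Finset.univ _ (Finset.mem_univ j)]
  congr 1
  · simp [dmono]
  · apply Finset.prod_congr rfl
    intro k hk
    have : k ≠ j := Finset.ne_of_mem_erase hk
    simp [dmono, Function.update_apply, this]

lemma mono_hasFDerivAt (μ : Fin d → ℕ) (x : Fin d → ℝ) :
    HasFDerivAt (mono μ)
      (∑ j, ((μ j : ℂ) * mono (dmono μ j) x) •
        (Complex.ofRealCLM.comp (ContinuousLinearMap.proj j))) x := by
  have h : ∀ j : Fin d, HasFDerivAt (fun x : Fin d → ℝ => ((x j : ℂ)) ^ μ j)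
      (((μ j : ℂ) * (x j : ℂ) ^ (μ j - 1)) •
        (Complex.ofRealCLM.comp (ContinuousLinearMap.proj j))) x := by
    intro j
    have hc0 := (Complex.ofRealCLM.comp
      (ContinuousLinearMap.proj (R := ℝ) (φ := fun _ : Fin d => ℝ) j)).hasFDerivAt (x := x)
    have hc : HasFDerivAt (fun x : Fin d → ℝ => ((x j : ℂ)))
        (Complex.ofRealCLM.comp (ContinuousLinearMap.proj j)) x := hc0
    have hp := (hasDerivAt_pow (μ j) ((x j : ℂ))).comp_hasFDerivAt x hc
    exact hp
  have h2 := HasFDerivAt.finset_prod (u := Finset.univ) (fun j _ => h j)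
  have h3 : HasFDerivAt (mono μ)
      (∑ j, (∏ k ∈ Finset.univ.erase j, ((x k : ℂ)) ^ μ k) •
        (((μ j : ℂ) * (x j : ℂ) ^ (μ j - 1)) •
          (Complex.ofRealCLM.comp (ContinuousLinearMap.proj j)))) x := h2
  refine h3.congr_fderiv ?_
  apply Finset.sum_congr rfl
  intro j _
  rw [smul_smul, mono_dmono]
  congr 1
  ring

lemma mono_differentiable (μ : Fin d → ℕ) : Differentiable ℝ (mono μ) :=
  fun x => (mono_hasFDerivAt μ x).differentiableAt

lemma contDiff_mono (μ : Fin d → ℕ) : ContDiff ℝ ∞ (mono μ) := by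
  have h : ∀ s : Finset (Fin d), ContDiff ℝ ∞ (fun x : Fin d → ℝ => ∏ i ∈ s, ((x i : ℂ)) ^ μ i) := by
    intro s
    induction s using Finset.induction with
    | empty => simpa using contDiff_const
    | insert _ _ hns ih =>
      simp only [Finset.prod_insert hns]
      exact (((Complex.ofRealCLM.comp (ContinuousLinearMap.proj _)).contDiff).pow _).mul ih
  exact h Finset.univ

lemma pd_mono (i : Fin d) (μ : Fin d → ℕ) :
    pd i (mono μ) = fun x => (μ i : ℂ) * mono (dmono μ i) x := by
  funext x
  rw [pd, (mono_hasFDerivAt μ x).fderiv, ContinuousLinearMap.sum_apply]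
  have h : ∀ j : Fin d, ((((μ j : ℂ) * mono (dmono μ j) x) •
        (Complex.ofRealCLM.comp
          (ContinuousLinearMap.proj (R := ℝ) (φ := fun _ : Fin d => ℝ) j)))
        ((Pi.single i 1 : Fin d → ℝ)))
      = if j = i then (μ i : ℂ) * mono (dmono μ i) x else 0 := by
    intro j
    rcases eq_or_ne j i with rfl | hji
    · simp [ContinuousLinearMap.smul_apply, Pi.single_apply]
    · simp [ContinuousLinearMap.smul_apply, Pi.single_apply, hji]
  rw [Finset.sum_congr rfl fun j _ => h j, Finset.sum_ite_eq' Finset.univ i]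
  simp

lemma pd_const_mul (i : Fin d) (c : ℂ) {f : (Fin d → ℝ) → ℂ} {x : Fin d → ℝ}
    (hf : DifferentiableAt ℝ f x) :
    pd i (fun y => c * f y) x = c * pd i f x := by
  simp only [pd, fderiv_const_mul hf c, ContinuousLinearMap.smul_apply, smul_eq_mul]

lemma coeff_cons (μ : Fin d → ℕ) (l : List (Fin d)) (j : Fin d) :
    (∏ i, (μ i).descFactorial (cnt (j :: l) i))
      = (μ j - cnt l j) * ∏ i, (μ i).descFactorial (cnt l i) := by
  rw [← Finset.mul_prod_erase Finset.univ _ (Finset.mem_univ j),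
      ← Finset.mul_prod_erase Finset.univ (fun i => (μ i).descFactorial (cnt l i))
        (Finset.mem_univ j)]
  have h1 : cnt (j :: l) j = cnt l j + 1 := by simp [cnt, List.count_cons]
  have h2 : ∀ i ∈ Finset.univ.erase j,
      (μ i).descFactorial (cnt (j :: l) i) = (μ i).descFactorial (cnt l i) := by
    intro i hi
    have hij : i ≠ j := Finset.ne_of_mem_erase hi
    simp [cnt, List.count_cons, hij, Ne.symm hij]
  rw [Finset.prod_congr rfl h2, h1, Nat.descFactorial_succ]
  ring

lemma cnt_cons_eq (μ : Fin d → ℕ) (l : List (Fin d)) (j : Fin d) :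
    μ - cnt (j :: l) = dmono (μ - cnt l) j := by
  funext k
  rcases eq_or_ne k j with rfl | hk
  · simp [cnt, dmono, List.count_cons, Nat.sub_sub]
  · simp [cnt, dmono, List.count_cons, hk, Ne.symm hk, Function.update_apply]

lemma mpdL_mono (l : List (Fin d)) (μ : Fin d → ℕ) :
    mpdL l (mono μ)
      = fun x => ((∏ i, (μ i).descFactorial (cnt l i) : ℕ) : ℂ) * mono (μ - cnt l) x := by
  induction l with
  | nil =>
    funext x
    have h1 : cnt ([] : List (Fin d)) = 0 := by funext k; simp [cnt]
    rw [mpdL_nil, h1]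
    simp
  | cons j l ih =>
    funext x
    rw [mpdL_cons, ih]
    have hf : DifferentiableAt ℝ
        (fun x => ((∏ i, (μ i).descFactorial (cnt l i) : ℕ) : ℂ) * mono (μ - cnt l) x) x :=
      ((mono_differentiable _) x).const_mul _
    have h1 : pd j (fun x => ((∏ i, (μ i).descFactorial (cnt l i) : ℕ) : ℂ)
          * mono (μ - cnt l) x) x
        = ((∏ i, (μ i).descFactorial (cnt l i) : ℕ) : ℂ) * pd j (mono (μ - cnt l)) x :=
      pd_const_mul j _ ((mono_differentiable _) x)
    rw [h1]
    simp only [pd_mono, coeff_cons, cnt_cons_eq]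
    have h2 : (μ - cnt l) j = μ j - cnt l j := rfl
    rw [h2]
    push_cast
    ring

lemma mono_zero_val (μ : Fin d → ℕ) : mono μ (0 : Fin d → ℝ) = if μ = 0 then 1 else 0 := by
  rcases eq_or_ne μ 0 with rfl | h
  · simp [mono]
  · obtain ⟨i, hi⟩ : ∃ i, μ i ≠ 0 := by
      by_contra hc; push_neg at hc; exact h (funext hc)
    rw [if_neg h]
    apply Finset.prod_eq_zero (Finset.mem_univ i)
    simp [zero_pow hi]

lemma mpdL_mono_zero (l : List (Fin d)) (μ : Fin d → ℕ) :
    mpdL l (mono μ) 0 = if cnt l = μ then (mfact μ : ℂ) else 0 := by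
  simp only [mpdL_mono]
  rcases eq_or_ne (cnt l) μ with he | hne
  · rw [if_pos he, he]
    have hz : μ - μ = 0 := by funext k; simp
    rw [hz, mono_zero_val, if_pos rfl, mul_one]
    norm_cast
    exact Finset.prod_congr rfl fun i _ => Nat.descFactorial_self (μ i)
  · rw [if_neg hne]
    by_cases hle : ∀ i, cnt l i ≤ μ i
    · have h0 : μ - cnt l ≠ 0 := by
        intro hzz
        apply hne
        funext k
        have hk := congrFun hzz k
        have hk' : μ k - cnt l k = 0 := hk
        have := hle k
        omega
      rw [mono_zero_val, if_neg h0, mul_zero]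
    · push_neg at hle
      obtain ⟨i, hi⟩ := hle
      have hdz : (μ i).descFactorial (cnt l i) = 0 :=
        Nat.descFactorial_eq_zero_iff_lt.mpr hi
      rw [Finset.prod_eq_zero (Finset.mem_univ i) hdz]
      simp

lemma pd_sum (i : Fin d) {ι : Type*} (s : Finset ι) (F : ι → (Fin d → ℝ) → ℂ) (x : Fin d → ℝ)
    (hF : ∀ μ ∈ s, DifferentiableAt ℝ (F μ) x) :
    pd i (fun y => ∑ μ ∈ s, F μ y) x = ∑ μ ∈ s, pd i (F μ) x := by
  simp only [pd]
  rw [fderiv_fun_sum hF, ContinuousLinearMap.sum_apply]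

lemma mpdL_monosum {ι : Type*} (s : Finset ι) (a : ι → ℂ) (ν : ι → (Fin d → ℕ))
    (l : List (Fin d)) :
    mpdL l (fun x => ∑ μ ∈ s, a μ * mono (ν μ) x)
      = fun x => ∑ μ ∈ s, a μ * mpdL l (mono (ν μ)) x := by
  induction l with
  | nil => rfl
  | cons i l ih =>
    funext x
    rw [mpdL_cons, ih]
    have hdiff : ∀ μ ∈ s, DifferentiableAt ℝ (fun x => a μ * mpdL l (mono (ν μ)) x) x := by
      intro μ _
      rw [mpdL_mono]
      exact (((mono_differentiable _) x).const_mul _).const_mul _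
    rw [pd_sum i s _ x hdiff]
    apply Finset.sum_congr rfl
    intro μ _
    have hf : DifferentiableAt ℝ (mpdL l (mono (ν μ))) x := by
      rw [mpdL_mono]
      exact ((mono_differentiable _) x).const_mul _
    exact pd_const_mul i (a μ) hf

end Vaux

namespace Vaux

open scoped ContDiff

variable {d : ℕ} {U : Set (Fin d → ℝ)}

lemma van (hU : IsOpen U) (h0 : (0 : Fin d → ℝ) ∈ U) :
    ∀ (n : ℕ) (l : List (Fin d)), l.length = n → ∀ (w f : (Fin d → ℝ) → ℂ),
      ContDiffOn ℝ ∞ w U → ContDiffOn ℝ ∞ f U →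
      (∀ l' : List (Fin d), l'.length ≤ l.length → mpdL l' f 0 = 0) →
      mpdL l (fun x => w x * f x) 0 = 0 := by
  intro n
  induction n with
  | zero =>
    intro l hl w f _ _ h
    have hnil : l = [] := List.length_eq_zero_iff.mp hl
    subst hnil
    have hf0 : f 0 = 0 := h [] (by simp)
    show w 0 * f 0 = 0
    rw [hf0, mul_zero]
  | succ n ih =>
    intro l hl w f hwc hfc h
    rcases List.eq_nil_or_concat l with rfl | ⟨l', i, rfl⟩
    · simp at hl
    · simp only [List.concat_eq_append] at hl h ⊢
      rw [mpdL_append]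
      have hlen : l'.length = n := by simpa using hl
      have hEq : EqOn (mpdL [i] (fun x => w x * f x))
          (fun x => pd i w x * f x + w x * pd i f x) U := by
        intro x hx
        exact pd_mul i (diffAt hU hwc hx) (diffAt hU hfc hx)
      have e1 : mpdL l' (mpdL [i] fun x => w x * f x) 0
          = mpdL l' (fun x => pd i w x * f x + w x * pd i f x) 0 :=
        mpdL_congrOn hU hEq l' h0
      rw [e1]
      have hpw := pd_contDiffOn hU hwc i
      have hpf := pd_contDiffOn hU hfc i
      have hadd : mpdL l' (fun x => pd i w x * f x + w x * pd i f x) 0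
          = mpdL l' (fun x => pd i w x * f x) 0 + mpdL l' (fun x => w x * pd i f x) 0 :=
        mpdL_add hU (hpw.mul hfc) (hwc.mul hpf) l' h0
      have t1 : mpdL l' (fun x => pd i w x * f x) 0 = 0 := by
        apply ih l' hlen (pd i w) f hpw hfc
        intro l'' hl''
        apply h l''
        simp only [List.length_append, List.length_cons, List.length_nil]
        omega
      have t2 : mpdL l' (fun x => w x * pd i f x) 0 = 0 := by
        apply ih l' hlen w (pd i f) hwc hpf
        intro l'' hl''
        have happ : mpdL l'' (pd i f) = mpdL (l'' ++ [i]) f := by rw [mpdL_append]; rfl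
        rw [happ]
        apply h (l'' ++ [i])
        simp only [List.length_append, List.length_cons, List.length_nil]
        omega
      rw [hadd, t1, t2, add_zero]

end Vaux


open Vaux

/-- The function `V_ω w` has value `1` at the origin and all its derivatives of order
`1 ≤ |α| ≤ ω` vanish at the origin. -/
theorem V_normalized_at_origin {d : ℕ} (ω : ℕ) (w : (Fin d → ℝ) → ℂ)
    (hw : ContDiff ℝ (⊤ : ℕ∞) w) (hw0 : w 0 ≠ 0) :
    Vop ω w 0 = 1 ∧
      ∀ α : Fin d → ℕ, 1 ≤ morder α → morder α ≤ ω → mpd α (Vop ω w) 0 = 0 := by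
  classical
  have hw' : ContDiff ℝ (⊤:ℕ∞) w := hw.of_le (by simp)
  set U : Set (Fin d → ℝ) := {x | w x ≠ 0} with hUdef
  have hU : IsOpen U := isOpen_compl_singleton.preimage hw'.continuous
  have h0U : (0 : Fin d → ℝ) ∈ U := hw0
  have hu : ContDiffOn ℝ (⊤:ℕ∞) (fun y => (w y)⁻¹) U := (hw'.contDiffOn).inv (fun x hx => hx)
  set c : (Fin d → ℕ) → ℂ := fun μ => mpd μ (fun y => (w y)⁻¹) 0 with hc
  set S : (Fin d → ℝ) → ℂ := fun x => ∑ μ ∈ midx d ω, (c μ / (mfact μ : ℂ)) * mono μ x with hS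
  have hVS : Vop ω w = fun x => w x * S x := by
    funext x
    show w x * ∑ μ ∈ midx d ω, mono μ x / (mfact μ : ℂ) * mpd μ (fun y => (w y)⁻¹) 0
        = w x * S x
    rw [hS]
    congr 1
    apply Finset.sum_congr rfl
    intro μ _
    rw [hc]
    ring
  have hmpd0 : ∀ f : (Fin d → ℝ) → ℂ, mpd 0 f = f := by
    intro f
    rw [mpd_eq_mpdL]
    have hnil : Lst (0 : Fin d → ℕ) = [] := by
      apply List.eq_nil_of_length_eq_zero
      rw [length_Lst]
      simp [morder]
    rw [hnil, mpdL_nil]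
  have h0mem : (0 : Fin d → ℕ) ∈ midx d ω := by
    rw [midx, Finset.mem_filter]
    constructor
    · rw [Fintype.mem_piFinset]
      intro i
      rw [Finset.mem_range]
      simp only [Pi.zero_apply]
      omega
    · simp [morder]
  have part1 : Vop ω w 0 = 1 := by
    rw [hVS]
    show w 0 * S 0 = 1
    have hS0 : S 0 = (w 0)⁻¹ := by
      rw [hS]
      show ∑ μ ∈ midx d ω, (c μ / (mfact μ : ℂ)) * mono μ 0 = (w 0)⁻¹
      rw [Finset.sum_eq_single_of_mem 0 h0mem]
      · rw [mono_zero_val, if_pos rfl]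
        have hmf : mfact (0 : Fin d → ℕ) = 1 := by simp [mfact]
        rw [hmf, hc]
        simp only [hmpd0]
        simp
      · intro μ _ hne
        rw [mono_zero_val, if_neg hne, mul_zero]
    rw [hS0, mul_inv_cancel₀ hw0]
  have hScd : ContDiffOn ℝ (⊤:ℕ∞) S U := by
    have hScd' : ContDiff ℝ (⊤:ℕ∞) S := by
      rw [hS]
      apply ContDiff.sum
      intro μ _
      exact contDiff_const.mul (contDiff_mono μ)
    exact hScd'.contDiffOn
  have hkey : ∀ l : List (Fin d), l.length ≤ ω →
      mpdL l S 0 = mpdL l (fun y => (w y)⁻¹) 0 := by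
    intro l hl
    have hperm := perm_Lst l
    set γ : Fin d → ℕ := fun i => l.count i with hγ
    have hcntγ : cnt (Lst γ) = γ := by
      funext k
      exact count_Lst γ k
    have hmorder : morder γ ≤ ω := by
      have h1 : (Lst γ).length = morder γ := length_Lst γ
      have h2 : l.length = (Lst γ).length := hperm.length_eq
      omega
    have hγmem : γ ∈ midx d ω := by
      rw [midx, Finset.mem_filter]
      refine ⟨?_, hmorder⟩
      rw [Fintype.mem_piFinset]
      intro i
      rw [Finset.mem_range]
      have hle : γ i ≤ morder γ :=
        Finset.single_le_sum (f := γ) (fun _ _ => Nat.zero_le _) (Finset.mem_univ i)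
      omega
    have hu0 : mpdL l (fun y => (w y)⁻¹) 0 = c γ := by
      have hp := mpdL_perm hU hu hperm h0U
      rw [hp, ← mpd_eq_mpdL, hc]
    have hS0' : mpdL l S 0 = c γ := by
      have h1 := mpdL_perm hU hScd hperm h0U
      rw [h1]
      have h2 : mpdL (Lst γ) S 0
          = ∑ μ ∈ midx d ω, (c μ / (mfact μ : ℂ)) * mpdL (Lst γ) (mono μ) 0 := by
        rw [hS]
        have h3 := mpdL_monosum (midx d ω) (fun μ => c μ / (mfact μ : ℂ)) (fun μ => μ) (Lst γ)
        exact congrFun h3 0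
      rw [h2, Finset.sum_eq_single_of_mem γ hγmem]
      · rw [mpdL_mono_zero, hcntγ, if_pos rfl]
        have hmfpos : 0 < mfact γ := Finset.prod_pos fun i _ => Nat.factorial_pos _
        rw [div_mul_cancel₀]
        exact Nat.cast_ne_zero.mpr hmfpos.ne'
      · intro μ _ hne
        rw [mpdL_mono_zero, hcntγ, if_neg (Ne.symm hne), mul_zero]
    rw [hS0', hu0]
  have hdiff0 : ∀ l : List (Fin d), l.length ≤ ω →
      mpdL l (fun x => S x - (w x)⁻¹) 0 = 0 := by
    intro l hl
    have hsub : mpdL l (fun x => S x - (w x)⁻¹) 0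
        = mpdL l S 0 - mpdL l (fun y => (w y)⁻¹) 0 := mpdL_sub hU hScd hu l h0U
    rw [hsub, hkey l hl, sub_self]
  refine ⟨part1, ?_⟩
  intro α hα1 hα2
  rw [mpd_eq_mpdL]
  have hlen : (Lst α).length = morder α := length_Lst α
  have hlne : Lst α ≠ [] := by
    intro hnil
    rw [hnil] at hlen
    simp at hlen
    omega
  have hEq2 : Set.EqOn (Vop ω w) (fun x => 1 + w x * (S x - (w x)⁻¹)) U := by
    intro x hx
    have hxne : w x ≠ 0 := hx
    rw [hVS]
    show w x * S x = 1 + w x * (S x - (w x)⁻¹)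
    rw [mul_sub, mul_inv_cancel₀ hxne]
    ring
  have e2 : mpdL (Lst α) (Vop ω w) 0 = mpdL (Lst α) (fun x => 1 + w x * (S x - (w x)⁻¹)) 0 :=
    mpdL_congrOn hU hEq2 (Lst α) h0U
  rw [e2, mpdL_const_add 1 _ hlne]
  apply van hU h0U (Lst α).length (Lst α) rfl w (fun x => S x - (w x)⁻¹)
    hw'.contDiffOn (hScd.sub hu)
  intro l' hl'
  apply hdiff0
  omega
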